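/- arXiv:1207.3031 — 2 statements merged into one kernel-verified Lean document; each statement's English description precedes it below -/
import Mathlib

section
/- (Regret bound for lazy projection.) Let W ⊆ ℝ^d be nonempty, closed, and convex, let w* ∈ W, let a > 0, and let g(1),…,g(T) ∈ ℝ^d with ‖g(t)‖ ≤ L. Define z(1) = w(1) ∈ W, and for t ≥ 1 set z(t+1) = z(t) - a·g(t) and w(t+1) = Π_W(z(t+1)), where Π_W is the Euclidean projection onto W. Then ∑_{t=1}^T ⟨g(t), w(t) - w*⟩ ≤ ‖w(1) - w*‖²/(2a) + T·a·L²/2. -/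
/-!
Lazy projection is dual averaging. The potential `Ψ θ = max_{u ∈ W} (⟪θ, u⟫ - ‖u‖² / 2)`
attains its maximum at `Π_W θ` and is `1`-smooth with gradient `Π_W`, so each step
`z ↦ z - a g` lowers `Ψ` by at least `a ⟪g, w⟫ - a² ‖g‖² / 2`. Summing over the rounds and
bounding `Ψ (z (T+1))` below by the maximized expression at `u = w*` gives the regret bound.
-/

open RealInnerProductSpace Finset

variable {E : Type*} [NormedAddCommGroup E]

def IsNearestPointMap (W : Set E) (proj : E → E) : Prop :=
  ∀ x, proj x ∈ W ∧ ∀ u ∈ W, ‖proj x - x‖ ≤ ‖u - x‖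

theorem IsNearestPointMap.apply_eq_self {W : Set E} {proj : E → E}
    (h : IsNearestPointMap W proj) {x : E} (hx : x ∈ W) : proj x = x := by
  simpa [sub_eq_zero] using (h x).2 x hx

theorem sum_norm_sq_le_card_mul {ι : Type*} {s : Finset ι} {g : ι → E} {L : ℝ}
    (hg : ∀ t ∈ s, ‖g t‖ ≤ L) : ∑ t ∈ s, ‖g t‖ ^ 2 ≤ s.card * L ^ 2 := by
  simpa using sum_le_sum fun t ht => pow_le_pow_left₀ (norm_nonneg (g t)) (hg t ht) 2

variable [InnerProductSpace ℝ E]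

/-- Equal to `max_{u ∈ W} (⟪θ, u⟫ - ‖u‖² / 2)` when `proj` is the nearest point map onto `W`. -/
noncomputable def lazyPotential (proj : E → E) (θ : E) : ℝ :=
  ⟪θ, proj θ⟫ - ‖proj θ‖ ^ 2 / 2

namespace IsNearestPointMap

variable {W : Set E} {proj : E → E}

theorem inner_sub_apply_le_zero (h : IsNearestPointMap W proj) (hW : Convex ℝ W) (x : E)
    {u : E} (hu : u ∈ W) : ⟪x - proj x, u - proj x⟫ ≤ 0 := by
  have : Nonempty W := ⟨⟨u, hu⟩⟩
  refine (norm_eq_iInf_iff_real_inner_le_zero hW (h x).1).1 ?_ u hu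
  have hbdd : BddBelow (Set.range fun v : W => ‖x - v‖) := ⟨0, by
    rintro _ ⟨v, rfl⟩
    exact norm_nonneg _⟩
  refine le_antisymm (le_ciInf fun v => ?_) (ciInf_le hbdd ⟨proj x, (h x).1⟩)
  simpa only [norm_sub_rev x] using (h x).2 v v.2

theorem inner_sub_half_sq_le_lazyPotential (h : IsNearestPointMap W proj) (θ : E) {u : E}
    (hu : u ∈ W) : ⟪θ, u⟫ - ‖u‖ ^ 2 / 2 ≤ lazyPotential proj θ := by
  have hsq : ‖proj θ - θ‖ ^ 2 ≤ ‖u - θ‖ ^ 2 :=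
    pow_le_pow_left₀ (norm_nonneg _) ((h θ).2 u hu) 2
  rw [norm_sub_sq_real, norm_sub_sq_real, real_inner_comm θ u, real_inner_comm θ (proj θ)] at hsq
  rw [lazyPotential]
  linarith

theorem lazyPotential_of_mem (h : IsNearestPointMap W proj) {x : E} (hx : x ∈ W) :
    lazyPotential proj x = ‖x‖ ^ 2 / 2 := by
  rw [lazyPotential, h.apply_eq_self hx, real_inner_self_eq_norm_sq]
  ring

/-- The descent lemma: `lazyPotential proj` is `1`-smooth with gradient `proj`. -/
theorem lazyPotential_sub_le (h : IsNearestPointMap W proj) (hW : Convex ℝ W) (θ v : E) :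
    lazyPotential proj (θ - v) ≤ lazyPotential proj θ - ⟪v, proj θ⟫ + ‖v‖ ^ 2 / 2 := by
  have hvar := h.inner_sub_apply_le_zero hW θ (h (θ - v)).1
  rw [lazyPotential, lazyPotential]
  set p := proj θ
  set q := proj (θ - v)
  have hgap : ⟪θ, p⟫ - ‖p‖ ^ 2 / 2 - ⟪v, p⟫ + ‖v‖ ^ 2 / 2 - (⟪θ - v, q⟫ - ‖q‖ ^ 2 / 2) =
      -⟪θ - p, q - p⟫ + ‖p - q - v‖ ^ 2 / 2 := by
    simp only [← real_inner_self_eq_norm_sq, inner_sub_left, inner_sub_right,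
      real_inner_comm p q, real_inner_comm v p, real_inner_comm v q]
    ring
  linarith [sq_nonneg ‖p - q - v‖]

end IsNearestPointMap

section LazyProjection

variable {W : Set E} {proj : E → E} {a : ℝ} {g z : ℕ → E}

theorem lazy_iterate_eq_sub_sum (hz : ∀ t ≥ 1, z (t + 1) = z t - a • g t) (n : ℕ) :
    z (n + 1) = z 1 - a • ∑ t ∈ Icc 1 n, g t := by
  induction n with
  | zero => simp
  | succ n ih =>
    rw [hz (n + 1) (by omega), ih, sum_Icc_succ_top (by omega), smul_add]
    abel

theorem lazyPotential_lazy_iterate_le (hproj : IsNearestPointMap W proj) (hW : Convex ℝ W)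
    (hz : ∀ t ≥ 1, z (t + 1) = z t - a • g t) (n : ℕ) :
    lazyPotential proj (z (n + 1)) ≤ lazyPotential proj (z 1)
      - a * ∑ t ∈ Icc 1 n, ⟪g t, proj (z t)⟫ + a ^ 2 / 2 * ∑ t ∈ Icc 1 n, ‖g t‖ ^ 2 := by
  induction n with
  | zero => simp
  | succ n ih =>
    have hstep := hproj.lazyPotential_sub_le hW (z (n + 1)) (a • g (n + 1))
    rw [← hz (n + 1) (by omega), real_inner_smul_left, norm_smul, mul_pow, Real.norm_eq_abs,
      sq_abs] at hstep
    rw [sum_Icc_succ_top (by omega), sum_Icc_succ_top (by omega)]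
    linarith

theorem lazy_projection_regret (hproj : IsNearestPointMap W proj) (hW : Convex ℝ W) {u : E}
    (hu : u ∈ W) (hz1 : z 1 ∈ W) (hz : ∀ t ≥ 1, z (t + 1) = z t - a • g t) (n : ℕ) :
    a * ∑ t ∈ Icc 1 n, ⟪g t, proj (z t) - u⟫ ≤
      ‖z 1 - u‖ ^ 2 / 2 + a ^ 2 / 2 * ∑ t ∈ Icc 1 n, ‖g t‖ ^ 2 := by
  have hupper := lazyPotential_lazy_iterate_le hproj hW hz n
  have hlower := hproj.inner_sub_half_sq_le_lazyPotential (z (n + 1)) hu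
  rw [hproj.lazyPotential_of_mem hz1] at hupper
  have hinner : ⟪z (n + 1), u⟫ = ⟪z 1, u⟫ - a * ∑ t ∈ Icc 1 n, ⟪g t, u⟫ := by
    rw [lazy_iterate_eq_sub_sum hz, inner_sub_left, real_inner_smul_left, sum_inner]
  simp only [inner_sub_right, sum_sub_distrib]
  rw [norm_sub_sq_real]
  linarith

end LazyProjection

theorem stmt_5_general {d : ℕ} (W : Set (EuclideanSpace ℝ (Fin d)))
    (hW : Convex ℝ W)
    (proj : EuclideanSpace ℝ (Fin d) → EuclideanSpace ℝ (Fin d))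
    (hproj : ∀ x, proj x ∈ W ∧ ∀ u ∈ W, ‖proj x - x‖ ≤ ‖u - x‖)
    (wstar : EuclideanSpace ℝ (Fin d)) (hwstar : wstar ∈ W)
    (a L : ℝ) (ha : 0 < a) (T : ℕ)
    (g z w : ℕ → EuclideanSpace ℝ (Fin d))
    (hg : ∀ t ∈ Finset.Icc 1 T, ‖g t‖ ≤ L)
    (hw1 : w 1 ∈ W) (hz1 : z 1 = w 1)
    (hz : ∀ t ≥ 1, z (t + 1) = z t - a • g t)
    (hwp : ∀ t ≥ 1, w (t + 1) = proj (z (t + 1))) :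
    ∑ t ∈ Finset.Icc 1 T, ⟪g t, w t - wstar⟫ ≤
      ‖w 1 - wstar‖ ^ 2 / (2 * a) + (T : ℝ) * a * L ^ 2 / 2 := by
  have hnear : IsNearestPointMap W proj := hproj
  have hw : ∀ t ∈ Icc 1 T, proj (z t) = w t := by
    intro t ht
    obtain ⟨s, rfl⟩ := Nat.exists_eq_add_of_le' (mem_Icc.1 ht).1
    rcases s.eq_zero_or_pos with rfl | hs
    · rw [hz1, hnear.apply_eq_self hw1]
    · exact (hwp s hs).symm
  have hregret := lazy_projection_regret hnear hW hwstar (hz1 ▸ hw1) hz T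
  rw [sum_congr rfl fun t ht => by rw [hw t ht], hz1] at hregret
  have hsq := sum_norm_sq_le_card_mul hg
  rw [Nat.card_Icc, Nat.add_sub_cancel] at hsq
  rw [div_add' _ _ _ (by positivity), le_div_iff₀ (by positivity)]
  nlinarith [mul_le_mul_of_nonneg_left hsq (sq_nonneg a)]

/-- Regret bound for the lazy projection algorithm (Zinkevich). -/
theorem stmt_5 {d : ℕ} (W : Set (EuclideanSpace ℝ (Fin d)))
    (hWne : W.Nonempty) (hWc : IsClosed W) (hW : Convex ℝ W)
    (proj : EuclideanSpace ℝ (Fin d) → EuclideanSpace ℝ (Fin d))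
    (hproj : ∀ x, proj x ∈ W ∧ ∀ u ∈ W, ‖proj x - x‖ ≤ ‖u - x‖)
    (wstar : EuclideanSpace ℝ (Fin d)) (hwstar : wstar ∈ W)
    (a L : ℝ) (ha : 0 < a) (T : ℕ)
    (g z w : ℕ → EuclideanSpace ℝ (Fin d))
    (hg : ∀ t ∈ Finset.Icc 1 T, ‖g t‖ ≤ L)
    (hw1 : w 1 ∈ W) (hz1 : z 1 = w 1)
    (hz : ∀ t ≥ 1, z (t + 1) = z t - a • g t)
    (hwp : ∀ t ≥ 1, w (t + 1) = proj (z (t + 1))) :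
    ∑ t ∈ Finset.Icc 1 T, ⟪g t, w t - wstar⟫ ≤
      ‖w 1 - wstar‖ ^ 2 / (2 * a) + (T : ℝ) * a * L ^ 2 / 2 :=
  stmt_5_general W hW proj hproj wstar hwstar a L ha T g z w hg hw1 hz1 hz hwp
end

section
/- (One-round network-consensus error bound.) Consider z_i(t+1) = ∑_j P_{ij} z_j(t) - a·g_i(t) with P doubly stochastic, ‖g_j(s)‖ ≤ L, step size a > 0, and let z̄(t) = (1/n)∑_i z_i(t). Suppose ‖(1/n)𝟙ᵀ - [Pᵗ]_{i,:}‖₁ ≤ √n(√λ₂)ᵗ with 0 ≤ λ₂ < 1, and ‖z_j(1)‖ ≤ Z for all j, with t ≤ T. Then ‖z_i(t) - z̄(t)‖ ≤ aL·(1 + 2log(T√n)/(1-√λ₂)) + 2aL + 2Z. -/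
/-!
Unrolling the recursion gives z(m+1) = Pᵐ z(1) - a ∑_{k<m} Pᵏ g(m-k), and the mean matrix
J = (1/n) 𝟙𝟙ᵀ absorbs P (JP = J, as the columns of P sum to 1), so the deviation from the mean is
(Pᵐ - J) z(1) - a ∑_{k<m} (Pᵏ - J) g(m-k). Every row of Pᵏ - J has ℓ₁-norm at most
min(2, √n μᵏ) with μ = √λ₂. In the resulting sum ∑_{k<m} min(2, √n μᵏ), the terms with
√n μᵏ ≤ 1/T add up to at most 1 (there are at most T of them), while √n μᵏ > 1/T forces
k < log(T√n)/(1-μ) because μ ≤ e^{μ-1}; these at most log(T√n)/(1-μ) + 1 terms are each ≤ 2.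
-/

open Finset Matrix

theorem eq_pow_smul_add_sum_of_forall_succ {S M : Type*} [Monoid S] [AddCommMonoid M]
    [DistribMulAction S M] {A : S} {x u : ℕ → M} (h : ∀ k, x (k + 1) = A • x k + u k) (m : ℕ) :
    x m = A ^ m • x 0 + ∑ k ∈ range m, A ^ k • u (m - 1 - k) := by
  induction m with
  | zero => simp
  | succ m ih =>
    rw [h, ih, sum_range_succ', smul_add, smul_sum, pow_succ', mul_smul, add_assoc, pow_zero,
      one_smul, Nat.add_sub_cancel, Nat.sub_zero]
    congr 2
    refine sum_congr rfl fun k _ => ?_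
    rw [pow_succ', mul_smul, show m - 1 - k = m - (k + 1) by omega]

theorem mul_pow_eq_self_of_mul_eq_self {S : Type*} [Monoid S] {A J : S} (hJ : J * A = J) (k : ℕ) :
    J * A ^ k = J := by
  induction k with
  | zero => simp
  | succ k ih => rw [pow_succ, ← mul_assoc, ih, hJ]

theorem sub_smul_eq_pow_sub_smul_add_sum_of_forall_succ {S M : Type*} [Ring S] [AddCommGroup M]
    [Module S M] {A J : S} (hJ : J * A = J) {x u : ℕ → M} (h : ∀ k, x (k + 1) = A • x k + u k)
    (m : ℕ) :
    x m - J • x m = (A ^ m - J) • x 0 + ∑ k ∈ range m, (A ^ k - J) • u (m - 1 - k) := by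
  calc x m - J • x m = (1 - J) • x m := by rw [sub_smul, one_smul]
    _ = _ := by
      rw [eq_pow_smul_add_sum_of_forall_succ h m, smul_add, smul_sum]
      simp only [← mul_smul, sub_mul, one_mul, mul_pow_eq_self_of_mul_eq_self hJ]

section Mean

variable (R ι : Type*) [Field R] [Fintype ι]

def meanMatrix : Matrix ι ι R :=
  of fun _ _ => 1 / (Fintype.card ι : R)

variable {R ι}

@[simp]
theorem meanMatrix_apply (i j : ι) : meanMatrix R ι i j = 1 / (Fintype.card ι : R) := rfl

theorem meanMatrix_mul_of_mem_colStochastic [PartialOrder R] [IsOrderedRing R] [DecidableEq ι]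
    {P : Matrix ι ι R} (hP : P ∈ colStochastic R ι) : meanMatrix R ι * P = meanMatrix R ι := by
  ext i j
  simp [mul_apply, ← mul_sum, sum_col_of_mem_colStochastic hP]

theorem sum_abs_sub_meanMatrix_le_two [LinearOrder R] [IsStrictOrderedRing R] [DecidableEq ι]
    {P : Matrix ι ι R} (hP : P ∈ rowStochastic R ι) (i : ι) :
    ∑ j, |(P - meanMatrix R ι) i j| ≤ 2 := by
  have hcard : (0 : R) < Fintype.card ι := Nat.cast_pos.2 (Fintype.card_pos_iff.2 ⟨i⟩)
  calc ∑ j, |(P - meanMatrix R ι) i j| ≤ ∑ j, (P i j + 1 / (Fintype.card ι : R)) := by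
        refine sum_le_sum fun j _ => (abs_sub _ _).trans ?_
        rw [abs_of_nonneg (nonneg_of_mem_rowStochastic hP), meanMatrix_apply,
          abs_of_nonneg (by positivity)]
    _ = 2 := by
        rw [sum_add_distrib, sum_row_of_mem_rowStochastic hP, sum_const, card_univ, nsmul_eq_mul,
          mul_one_div_cancel hcard.ne']
        norm_num

end Mean

-- `Matrix.Module` makes `ι → E` a module over `Matrix ι ι ℝ`, with `(Q • v) i = ∑ j, Q i j • v j`.
open Matrix.Module in
theorem norm_matrix_smul_apply_le {ι E : Type*} [Fintype ι] [DecidableEq ι]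
    [SeminormedAddCommGroup E] [NormedSpace ℝ E] (Q : Matrix ι ι ℝ) {v : ι → E} {C : ℝ}
    (hv : ∀ j, ‖v j‖ ≤ C) (i : ι) : ‖(Q • v) i‖ ≤ (∑ j, |Q i j|) * C := by
  rw [Module.smul_apply, sum_mul]
  refine (norm_sum_le _ _).trans (sum_le_sum fun j _ => ?_)
  rw [norm_smul, Real.norm_eq_abs]
  exact mul_le_mul_of_nonneg_left (hv j) (abs_nonneg _)

theorem min_two_mul_pow_le {μ c T : ℝ} (hμ0 : 0 ≤ μ) (hμ1 : μ < 1) (hc : 0 ≤ c) (hTc : 1 ≤ T * c)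
    (k : ℕ) :
    min 2 (c * μ ^ k) ≤ 1 / T + if (k : ℝ) < Real.log (T * c) / (1 - μ) then 2 else 0 := by
  have hT : 0 < T := pos_of_mul_pos_left (by linarith) hc
  have hc0 : 0 < c := pos_of_mul_pos_right (by linarith) hT.le
  split_ifs with hk
  · exact (min_le_left _ _).trans (le_add_of_nonneg_left (by positivity))
  · push Not at hk
    -- `μ ≤ exp (μ - 1)` turns the geometric decay into `exp (-k (1 - μ)) ≤ 1 / (T c)`.
    rw [div_le_iff₀ (by linarith)] at hk
    have hμk : μ ^ k ≤ Real.exp (μ - 1) ^ k :=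
      pow_le_pow_left₀ hμ0 (by linarith [Real.add_one_le_exp (μ - 1)]) k
    calc min 2 (c * μ ^ k) ≤ c * Real.exp (μ - 1) ^ k :=
          (min_le_right _ _).trans (mul_le_mul_of_nonneg_left hμk hc)
      _ ≤ c * Real.exp (-Real.log (T * c)) := by
          rw [← Real.exp_nat_mul]
          gcongr
          nlinarith
      _ = 1 / T := by
          rw [Real.exp_neg, Real.exp_log (by linarith)]
          field_simp
      _ = 1 / T + 0 := (add_zero _).symm

theorem sum_range_min_two_mul_pow_le {μ c T : ℝ} (hμ0 : 0 ≤ μ) (hμ1 : μ < 1) (hc : 0 ≤ c)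
    (hTc : 1 ≤ T * c) {m : ℕ} (hm : (m : ℝ) ≤ T) :
    ∑ k ∈ range m, min 2 (c * μ ^ k) ≤ 3 + 2 * Real.log (T * c) / (1 - μ) := by
  set B := Real.log (T * c) / (1 - μ)
  have hT : 0 < T := pos_of_mul_pos_left (by linarith) hc
  have hB : 0 ≤ B := div_nonneg (Real.log_nonneg hTc) (by linarith)
  have hlarge : #((range m).filter fun k : ℕ => (k : ℝ) < B) ≤ ⌈B⌉₊ := by
    calc #((range m).filter fun k : ℕ => (k : ℝ) < B) ≤ #(range ⌈B⌉₊) :=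
          card_le_card fun k hk => mem_range.2 (Nat.lt_ceil.2 (mem_filter.1 hk).2)
      _ = ⌈B⌉₊ := card_range _
  calc ∑ k ∈ range m, min 2 (c * μ ^ k)
      ≤ ∑ k ∈ range m, (1 / T + if (k : ℝ) < B then 2 else 0) :=
        sum_le_sum fun k _ => min_two_mul_pow_le hμ0 hμ1 hc hTc k
    _ = m / T + 2 * #((range m).filter fun k : ℕ => (k : ℝ) < B) := by
        rw [sum_add_distrib, sum_ite, sum_const, sum_const, sum_const_zero, card_range]
        simp only [nsmul_eq_mul]
        ring
    _ ≤ 1 + 2 * (B + 1) := by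
        gcongr
        · rwa [div_le_one hT]
        · exact (Nat.cast_le.2 hlarge).trans (Nat.ceil_lt_add_one hB).le
    _ = 3 + 2 * Real.log (T * c) / (1 - μ) := by ring

open Matrix.Module in
theorem norm_sub_mean_le_of_forall_succ {ι E : Type*} [Fintype ι] [DecidableEq ι]
    [SeminormedAddCommGroup E] [NormedSpace ℝ E] {P : Matrix ι ι ℝ} (hP : P ∈ colStochastic ℝ ι)
    {x u : ℕ → ι → E} (h : ∀ k i, x (k + 1) i = ∑ j, P i j • x k j + u k i)
    {Z C : ℝ} (hx : ∀ j, ‖x 0 j‖ ≤ Z) (hu : ∀ k j, ‖u k j‖ ≤ C) (m : ℕ) (i : ι) :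
    ‖x m i - (1 / (Fintype.card ι : ℝ)) • ∑ j, x m j‖ ≤
      (∑ j, |(P ^ m - meanMatrix ℝ ι) i j|) * Z +
        ∑ k ∈ range m, (∑ j, |(P ^ k - meanMatrix ℝ ι) i j|) * C := by
  have hdev := congrFun (sub_smul_eq_pow_sub_smul_add_sum_of_forall_succ
    (meanMatrix_mul_of_mem_colStochastic hP) (fun k => funext (h k)) m) i
  rw [Pi.sub_apply, Module.smul_apply] at hdev
  simp only [meanMatrix_apply, ← smul_sum] at hdev
  rw [hdev]
  refine (norm_add_le _ _).trans (add_le_add (norm_matrix_smul_apply_le _ hx i) ?_)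
  rw [Finset.sum_apply]
  exact (norm_sum_le _ _).trans (sum_le_sum fun k _ => norm_matrix_smul_apply_le _ (hu _) i)

theorem stmt_12_general {d n : ℕ} (P : Matrix (Fin n) (Fin n) ℝ)
    (hPnn : ∀ i j, 0 ≤ P i j)
    (hProw : ∀ i, ∑ j, P i j = 1)
    (hPcol : ∀ j, ∑ i, P i j = 1)
    (lam : ℝ) (hlam1 : lam < 1)
    (hmix : ∀ t : ℕ, ∀ i, ∑ j, |1 / (n:ℝ) - (P ^ t) i j| ≤
      Real.sqrt n * (Real.sqrt lam) ^ t)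
    (a L Z : ℝ) (ha : 0 < a) (hL : 0 ≤ L) (hZ : 0 ≤ Z)
    (z g : ℕ → Fin n → EuclideanSpace ℝ (Fin d))
    (hg : ∀ s j, ‖g s j‖ ≤ L)
    (hz1 : ∀ j, ‖z 1 j‖ ≤ Z)
    (hupd : ∀ t ≥ 1, ∀ i, z (t + 1) i = (∑ j, P i j • z t j) - a • g t i)
    (T : ℕ) (t : ℕ) (ht1 : 1 ≤ t) (ht : t ≤ T) (i : Fin n) :
    ‖z t i - (1 / (n:ℝ)) • ∑ j, z t j‖ ≤
      a * L * (1 + 2 * Real.log ((T : ℝ) * Real.sqrt n) / (1 - Real.sqrt lam))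
        + 2 * a * L + 2 * Z := by
  have hP : P ∈ doublyStochastic ℝ (Fin n) := mem_doublyStochastic_iff_sum.2 ⟨hPnn, hProw, hPcol⟩
  have hrow : ∀ k, ∑ j, |(P ^ k - meanMatrix ℝ (Fin n)) i j| ≤ min 2 (√n * √lam ^ k) :=
    fun k => le_min (sum_abs_sub_meanMatrix_le_two
      (mem_doublyStochastic_iff_mem_rowStochastic_and_mem_colStochastic.1 (pow_mem hP k)).1 i)
      (by simpa [abs_sub_comm] using hmix k i)
  obtain ⟨m, rfl⟩ : ∃ m, t = m + 1 := ⟨t - 1, by omega⟩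
  have hdev := norm_sub_mean_le_of_forall_succ
    (mem_doublyStochastic_iff_mem_rowStochastic_and_mem_colStochastic.1 hP).2
    (x := fun k => z (k + 1)) (u := fun k => -(a • g (k + 1)))
    (fun k i => by simp [hupd (k + 1) (by omega) i, sub_eq_add_neg]) hz1
    (fun k j => by simpa [norm_smul, abs_of_pos ha] using
      mul_le_mul_of_nonneg_left (hg (k + 1) j) ha.le) m i
  simp only [Fintype.card_fin] at hdev
  have hsum := sum_range_min_two_mul_pow_le (Real.sqrt_nonneg lam)
    ((Real.sqrt_lt' one_pos).2 (by simpa using hlam1)) (Real.sqrt_nonneg n)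
    (one_le_mul_of_one_le_of_one_le (by exact_mod_cast ht1.trans ht)
      (Real.one_le_sqrt.2 (Nat.one_le_cast.2 i.pos)))
    (T := T) (m := m) (by exact_mod_cast (Nat.le_succ m).trans ht)
  calc _ ≤ 2 * Z + (∑ k ∈ range m, min 2 (√n * √lam ^ k)) * (a * L) := by
        refine hdev.trans ?_
        rw [← sum_mul]
        gcongr with k
        exacts [(hrow m).trans (min_le_left _ _), hrow k]
    _ ≤ 2 * Z + (3 + 2 * Real.log (T * √n) / (1 - √lam)) * (a * L) := by gcongr
    _ = _ := by ring

/-- One-round network-consensus error bound: each node's accumulated gradient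
variable stays close to the network average. -/
theorem stmt_12 {d n : ℕ} (hn : 1 ≤ n) (P : Matrix (Fin n) (Fin n) ℝ)
    (hPnn : ∀ i j, 0 ≤ P i j)
    (hProw : ∀ i, ∑ j, P i j = 1)
    (hPcol : ∀ j, ∑ i, P i j = 1)
    (lam : ℝ) (hlam0 : 0 ≤ lam) (hlam1 : lam < 1)
    (hmix : ∀ t : ℕ, ∀ i, ∑ j, |1 / (n:ℝ) - (P ^ t) i j| ≤
      Real.sqrt n * (Real.sqrt lam) ^ t)
    (a L Z : ℝ) (ha : 0 < a) (hL : 0 ≤ L) (hZ : 0 ≤ Z)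
    (z g : ℕ → Fin n → EuclideanSpace ℝ (Fin d))
    (hg : ∀ s j, ‖g s j‖ ≤ L)
    (hz1 : ∀ j, ‖z 1 j‖ ≤ Z)
    (hupd : ∀ t ≥ 1, ∀ i, z (t + 1) i = (∑ j, P i j • z t j) - a • g t i)
    (T : ℕ) (hT : 1 ≤ T) (t : ℕ) (ht1 : 1 ≤ t) (ht : t ≤ T) (i : Fin n) :
    ‖z t i - (1 / (n:ℝ)) • ∑ j, z t j‖ ≤
      a * L * (1 + 2 * Real.log ((T : ℝ) * Real.sqrt n) / (1 - Real.sqrt lam))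
        + 2 * a * L + 2 * Z :=
  stmt_12_general P hPnn hProw hPcol lam hlam1 hmix a L Z ha hL hZ z g hg hz1 hupd T t ht1 ht i
end
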